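/- arXiv:math/0610749 — 3 statements merged into one kernel-verified Lean document; each statement's English description precedes it below -/
import Mathlib

section
/- The exponential-utility generator satisfies the local Lipschitz condition in z of assumption (H₂): for all z¹, z² ∈ E, |F^α(z¹) − F^α(z²)| ≤ (α/2)‖m(z¹ − z²)‖ · ( ‖m z¹‖ + ‖m z²‖ + 2α⁻¹‖m λ‖ ) + ‖m(z¹ − z²)‖ · ‖m λ‖. -/
open scoped RealInnerProductSpace

/-! The infimum in `F^α` is `(α/2) D(z + α⁻¹λ)²`, where `D(w) = infDist (m w) (m '' C)`.
Since `D` is `1`-Lipschitz for the seminorm `‖m ·‖` and `D(w) ≤ ‖m w‖` (because `0 ∈ C`),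
factoring `D₁² - D₂² = (D₁ - D₂)(D₁ + D₂)` gives the quadratic part of the bound; the linear
term `⟪m z, m λ⟫` contributes `‖m(z¹ - z²)‖ ‖m λ‖` by Cauchy–Schwarz. -/

namespace Metric

theorem sInf_image_mul_dist_sq {X : Type*} [PseudoMetricSpace X] {c : ℝ} (hc : 0 ≤ c)
    (x : X) (s : Set X) :
    sInf ((fun y => c * dist x y ^ 2) '' s) = c * infDist x s ^ 2 := by
  rcases s.eq_empty_or_nonempty with rfl | hs
  · simp
  have hdist : (dist x ·) '' s ⊆ Set.Ici 0 := by
    rintro _ ⟨y, -, rfl⟩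
    exact dist_nonneg
  have hmono : MonotoneOn (fun t : ℝ => c * t ^ 2) ((dist x ·) '' s) :=
    fun a ha b _ hab => mul_le_mul_of_nonneg_left (pow_le_pow_left₀ (hdist ha) hab 2) hc
  rw [← (isGLB_infDist hs).csInf_eq (hs.image _),
    hmono.map_csInf_of_continuousWithinAt (by fun_prop) (hs.image _) ⟨0, hdist⟩, Set.image_image]

theorem abs_infDist_sq_sub_infDist_sq_le {E : Type*} [SeminormedAddCommGroup E] {s : Set E}
    (h0 : (0 : E) ∈ s) (x y : E) :
    |infDist x s ^ 2 - infDist y s ^ 2| ≤ ‖x - y‖ * (‖x‖ + ‖y‖) := by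
  have hsub : |infDist x s - infDist y s| ≤ ‖x - y‖ := by
    simpa [Real.dist_eq, dist_eq_norm] using (lipschitz_infDist_pt s).dist_le_mul x y
  have hadd : |infDist x s + infDist y s| ≤ ‖x‖ + ‖y‖ := by
    rw [abs_of_nonneg (add_nonneg infDist_nonneg infDist_nonneg)]
    simpa using add_le_add (infDist_le_dist_of_mem (x := x) h0)
      (infDist_le_dist_of_mem (x := y) h0)
  rw [sq_sub_sq, abs_mul, mul_comm]
  exact mul_le_mul hsub hadd (abs_nonneg _) (norm_nonneg _)

end Metric

theorem stmt_1_general {d : ℕ}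
    (m : EuclideanSpace ℝ (Fin d) →ₗ[ℝ] EuclideanSpace ℝ (Fin d))
    (C : Set (EuclideanSpace ℝ (Fin d)))
    (h0C : (0 : EuclideanSpace ℝ (Fin d)) ∈ C)
    (lam : EuclideanSpace ℝ (Fin d)) (α : ℝ) (hα : 0 < α)
    (F : EuclideanSpace ℝ (Fin d) → ℝ)
    (hF : ∀ z, F z =
      sInf ((fun ν => α / 2 * ‖m (ν - (z + α⁻¹ • lam))‖ ^ 2) '' C)
        - ⟪m z, m lam⟫ - (2 * α)⁻¹ * ‖m lam‖ ^ 2) :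
    ∀ z₁ z₂, |F z₁ - F z₂| ≤
      α / 2 * ‖m (z₁ - z₂)‖ * (‖m z₁‖ + ‖m z₂‖ + 2 * α⁻¹ * ‖m lam‖)
        + ‖m (z₁ - z₂)‖ * ‖m lam‖ := by
  intro z₁ z₂
  set D := fun z => Metric.infDist (m z + α⁻¹ • m lam) (m '' C)
  have hFD : ∀ z, F z = α / 2 * D z ^ 2 - ⟪m z, m lam⟫ - (2 * α)⁻¹ * ‖m lam‖ ^ 2 := by
    intro z
    rw [hF, ← Metric.sInf_image_mul_dist_sq (by positivity), Set.image_image]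
    simp [dist_eq_norm, norm_sub_rev]
  have hD : |D z₁ ^ 2 - D z₂ ^ 2| ≤
      ‖m (z₁ - z₂)‖ * (‖m z₁‖ + ‖m z₂‖ + 2 * α⁻¹ * ‖m lam‖) := by
    have hshift : ∀ z, ‖m z + α⁻¹ • m lam‖ ≤ ‖m z‖ + α⁻¹ * ‖m lam‖ := fun z =>
      (norm_add_le _ _).trans_eq (by rw [norm_smul_of_nonneg (by positivity)])
    calc |D z₁ ^ 2 - D z₂ ^ 2|
        ≤ ‖m (z₁ - z₂)‖ * (‖m z₁ + α⁻¹ • m lam‖ + ‖m z₂ + α⁻¹ • m lam‖) := by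
          simpa [map_sub] using Metric.abs_infDist_sq_sub_infDist_sq_le (s := m '' C)
            ⟨0, h0C, map_zero m⟩ (m z₁ + α⁻¹ • m lam) (m z₂ + α⁻¹ • m lam)
      _ ≤ _ := mul_le_mul_of_nonneg_left (by linarith [hshift z₁, hshift z₂]) (norm_nonneg _)
  calc |F z₁ - F z₂|
      = |α / 2 * (D z₁ ^ 2 - D z₂ ^ 2) - ⟪m (z₁ - z₂), m lam⟫| := by
        rw [hFD, hFD, map_sub, inner_sub_left]
        ring_nf
    _ ≤ α / 2 * |D z₁ ^ 2 - D z₂ ^ 2| + ‖m (z₁ - z₂)‖ * ‖m lam‖ := by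
        refine (abs_sub _ _).trans (add_le_add ?_ (abs_real_inner_le_norm _ _))
        rw [abs_mul, abs_of_pos (by positivity)]
    _ ≤ _ := by
        rw [mul_assoc]
        gcongr

/-- The exponential-utility generator satisfies the local Lipschitz condition in `z`
of assumption (H₂). -/
theorem stmt_1 {d : ℕ}
    (m : EuclideanSpace ℝ (Fin d) →ₗ[ℝ] EuclideanSpace ℝ (Fin d))
    (C : Set (EuclideanSpace ℝ (Fin d))) (hCne : C.Nonempty) (hCcl : IsClosed C)
    (h0C : (0 : EuclideanSpace ℝ (Fin d)) ∈ C)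
    (lam : EuclideanSpace ℝ (Fin d)) (α : ℝ) (hα : 0 < α)
    (F : EuclideanSpace ℝ (Fin d) → ℝ)
    (hF : ∀ z, F z =
      sInf ((fun ν => α / 2 * ‖m (ν - (z + α⁻¹ • lam))‖ ^ 2) '' C)
        - ⟪m z, m lam⟫ - (2 * α)⁻¹ * ‖m lam‖ ^ 2) :
    ∀ z₁ z₂, |F z₁ - F z₂| ≤
      α / 2 * ‖m (z₁ - z₂)‖ * (‖m z₁‖ + ‖m z₂‖ + 2 * α⁻¹ * ‖m lam‖)
        + ‖m (z₁ - z₂)‖ * ‖m lam‖ :=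
  stmt_1_general m C h0C lam α hα F hF
end

section
/- Measurable selection of the optimal strategy: there exists a measurable map ν* : S → E such that for every s ∈ S, ν*(s) ∈ C and ‖M(s)(ν*(s) − (Z(s) + α⁻¹λ(s)))‖² = inf_{ν ∈ C} ‖M(s)(ν − (Z(s) + α⁻¹λ(s)))‖². -/
open Filter Topology Metric

theorem aux_seq {S : Type*} [MeasurableSpace S] {d : ℕ} (c : ℕ → EuclideanSpace ℝ (Fin d))
    (D : ℕ → S → EuclideanSpace ℝ (Fin d) → Prop)
    (hDmeas : ∀ k n, MeasurableSet {s | D k s (c n)})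
    (hbase : ∀ s, ∃ n, D 0 s (c n))
    (hstep : ∀ s k x, D k s x → ∃ n, D (k+1) s (c n) ∧ dist (c n) x < (2:ℝ)⁻¹^k * 2) :
    ∃ v : ℕ → S → EuclideanSpace ℝ (Fin d), (∀ k, Measurable (v k)) ∧
      (∀ k s, D k s (v k s)) ∧ ∀ k s, dist (v (k+1) s) (v k s) < (2:ℝ)⁻¹^k * 2 := by
  classical
  let p : ∀ (k : ℕ), (S → EuclideanSpace ℝ (Fin d)) → ℕ → S → Prop :=
    fun k w n s => D (k+1) s (c n) ∧ dist (c n) (w s) < (2:ℝ)⁻¹^k * 2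
  let W : ℕ → Type _ := fun k => {v : S → EuclideanSpace ℝ (Fin d) // Measurable v ∧ ∀ s, D k s (v s)}
  let base : W 0 := ⟨fun s => c (Nat.find (hbase s)),
    Measurable.find (f := fun n _ => c n) (fun _ => measurable_const) (fun n => hDmeas 0 n) hbase,
    fun s => Nat.find_spec (hbase s)⟩
  let H : ∀ k (prev : W k) (s : S), ∃ n, p k prev.1 n s :=
    fun k prev s => hstep s k (prev.1 s) (prev.2.2 s)
  have hpm : ∀ k (prev : W k) n, MeasurableSet {s | p k prev.1 n s} := fun k prev n =>
    (hDmeas (k+1) n).inter (measurableSet_lt (measurable_const.dist prev.2.1) measurable_const)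
  let step : ∀ k, W k → W (k+1) := fun k prev =>
    ⟨fun s => c (Nat.find (H k prev s)),
     Measurable.find (f := fun n _ => c n) (fun _ => measurable_const) (hpm k prev) (H k prev),
     fun s => (Nat.find_spec (H k prev s)).1⟩
  let seq : ∀ k, W k := fun k => Nat.rec base step k
  exact ⟨fun k => (seq k).1, fun k => (seq k).2.1, fun k => (seq k).2.2,
    fun k s => (Nat.find_spec (H k (seq k) s)).2⟩

theorem exists_measurable_argmin {S : Type*} [MeasurableSpace S] {d : ℕ}
    (C : Set (EuclideanSpace ℝ (Fin d))) (hCne : C.Nonempty) (hCcl : IsClosed C)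
    (f : S → EuclideanSpace ℝ (Fin d) → ℝ)
    (hfm : ∀ x, Measurable fun s => f s x)
    (hfc : ∀ s, Continuous (f s))
    (hmin : ∀ s, ∃ y ∈ C, ∀ z ∈ C, f s y ≤ f s z) :
    ∃ ν : S → EuclideanSpace ℝ (Fin d), Measurable ν ∧
      ∀ s, ν s ∈ C ∧ f s (ν s) = sInf (f s '' C) := by
  classical
  haveI : Nonempty ↥C := hCne.to_subtype
  obtain ⟨u, hu⟩ := TopologicalSpace.exists_dense_seq ↥C
  set c : ℕ → EuclideanSpace ℝ (Fin d) := fun n => (u n : EuclideanSpace ℝ (Fin d)) with hc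
  have hcC : ∀ n, c n ∈ C := fun n => (u n).2
  have hcd : ∀ y ∈ C, ∀ ε > 0, ∃ n, dist (c n) y < ε := by
    intro y hy ε hε
    obtain ⟨n, hn⟩ := hu.exists_dist_lt (⟨y, hy⟩ : ↥C) hε
    exact ⟨n, by simpa [Subtype.dist_eq, dist_comm] using hn⟩
  set m : S → ℝ := fun s => sInf (f s '' C) with hm
  have hbdd : ∀ s, BddBelow (f s '' C) := by
    intro s; obtain ⟨y, hy, hmin'⟩ := hmin s
    exact ⟨f s y, by rintro _ ⟨z, hz, rfl⟩; exact hmin' z hz⟩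
  have hmle : ∀ s, ∀ z ∈ C, m s ≤ f s z := fun s z hz => csInf_le (hbdd s) ⟨z, hz, rfl⟩
  have hm_eq : ∀ s, ∃ y ∈ C, f s y = m s := by
    intro s; obtain ⟨y, hy, hmin'⟩ := hmin s
    refine ⟨y, hy, le_antisymm ?_ (hmle s y hy)⟩
    exact le_csInf (hCne.image _) (by rintro _ ⟨z, hz, rfl⟩; exact hmin' z hz)
  have hml : ∀ s a, m s < a ↔ ∃ n, f s (c n) < a := by
    intro s a
    constructor
    · intro h
      obtain ⟨y, hy, hye⟩ := hm_eq s
      have hopen : IsOpen {z | f s z < a} := isOpen_lt (hfc s) continuous_const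
      obtain ⟨ε, hε, hball⟩ := Metric.isOpen_iff.1 hopen y (by simp [hye]; linarith)
      obtain ⟨n, hn⟩ := hcd y hy ε hε
      exact ⟨n, hball (by simpa [Metric.mem_ball] using hn)⟩
    · rintro ⟨n, hn⟩
      exact lt_of_le_of_lt (hmle s _ (hcC n)) hn
  have hmmeas : Measurable m := by
    apply measurable_of_Iio
    intro a
    have : m ⁻¹' (Set.Iio a) = ⋃ n, {s | f s (c n) < a} := by
      ext s; simp [hml s a]
    rw [this]
    exact MeasurableSet.iUnion fun n => measurableSet_lt (hfm (c n)) measurable_const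
  -- the approximate-distance functions
  set g : ℕ → S → EuclideanSpace ℝ (Fin d) → ENNReal := fun j s x =>
    ⨅ n, (if f s (c n) < m s + ((j:ℝ)+1)⁻¹ then ENNReal.ofReal (dist x (c n)) else ⊤) with hg
  have hgm : ∀ j x, Measurable fun s => g j s x := by
    intro j x
    apply Measurable.iInf
    intro n
    exact Measurable.ite (measurableSet_lt (hfm (c n)) (hmmeas.add_const _))
      measurable_const measurable_const
  set F : S → Set (EuclideanSpace ℝ (Fin d)) := fun s => C ∩ {y | f s y ≤ m s} with hF
  have hFne : ∀ s, (F s).Nonempty := by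
    intro s; obtain ⟨y, hy, hye⟩ := hm_eq s; exact ⟨y, hy, le_of_eq hye⟩
  have hFcl : ∀ s, IsClosed (F s) := fun s =>
    hCcl.inter (isClosed_le (hfc s) continuous_const)
  -- key lemma (i)
  have key1 : ∀ s x ρ, 0 < ρ → (∃ y ∈ F s, dist x y < ρ) → ∀ j, g j s x < ENNReal.ofReal ρ := by
    rintro s x ρ hρ ⟨y, ⟨hyC, hyle⟩, hxy⟩ j
    have hyle' : f s y ≤ m s := hyle
    have hopen : IsOpen {z | f s z < m s + ((j:ℝ)+1)⁻¹} := isOpen_lt (hfc s) continuous_const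
    have hymem : y ∈ {z | f s z < m s + ((j:ℝ)+1)⁻¹} := by
      have : (0:ℝ) < ((j:ℝ)+1)⁻¹ := by positivity
      simp only [Set.mem_setOf_eq]; linarith
    obtain ⟨η, hη, hball⟩ := Metric.isOpen_iff.1 hopen y hymem
    obtain ⟨n, hn⟩ := hcd y hyC (min η (ρ - dist x y)) (lt_min hη (by linarith))
    have h1 : f s (c n) < m s + ((j:ℝ)+1)⁻¹ :=
      hball (by simp [Metric.mem_ball]; exact lt_of_lt_of_le hn (min_le_left _ _))
    have h2 : dist x (c n) < ρ := by
      have := hn.trans_le (min_le_right _ _)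
      calc dist x (c n) ≤ dist x y + dist y (c n) := dist_triangle _ _ _
        _ < ρ := by rw [dist_comm y (c n)]; linarith
    calc g j s x ≤ _ := iInf_le _ n
      _ < ENNReal.ofReal ρ := by
          rw [if_pos h1]
          exact (ENNReal.ofReal_lt_ofReal_iff_of_nonneg dist_nonneg).2 h2
  -- key lemma (ii)
  have key2 : ∀ s x ρ, 0 < ρ → (∀ j, g j s x < ENNReal.ofReal ρ) → ∃ y ∈ F s, dist x y ≤ ρ := by
    intro s x ρ hρ h
    have hsel : ∀ j : ℕ, ∃ n, f s (c n) < m s + ((j:ℝ)+1)⁻¹ ∧ dist x (c n) < ρ := by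
      intro j
      obtain ⟨n, hn⟩ := exists_lt_of_ciInf_lt (h j)
      by_cases hcond : f s (c n) < m s + ((j:ℝ)+1)⁻¹
      · rw [if_pos hcond] at hn
        exact ⟨n, hcond, (ENNReal.ofReal_lt_ofReal_iff hρ).1 hn⟩
      · rw [if_neg hcond] at hn; exact absurd hn (by simp)
    choose w hw1 hw2 using hsel
    have hmem : ∀ j, c (w j) ∈ closedBall x ρ := fun j => by
      simp [Metric.mem_closedBall, dist_comm]; exact (hw2 j).le
    obtain ⟨y, hyball, φ, hφ, htend⟩ :=
      (isCompact_closedBall x ρ).tendsto_subseq hmem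
    have hyC : y ∈ C := hCcl.mem_of_tendsto htend (Eventually.of_forall fun i => hcC _)
    have hfy : f s y ≤ m s := by
      have h1 : Tendsto (fun i => f s (c (w (φ i)))) atTop (𝓝 (f s y)) :=
        ((hfc s).tendsto y).comp htend
      have h2 : Tendsto (fun i : ℕ => m s + ((i:ℝ)+1)⁻¹) atTop (𝓝 (m s)) := by
        have := tendsto_one_div_add_atTop_nhds_zero_nat (𝕜 := ℝ)
        simpa [one_div] using tendsto_const_nhds.add this
      refine le_of_tendsto_of_tendsto' h1 h2 fun i => ?_
      have hb := hw1 (φ i)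
      have : ((φ i : ℝ)+1)⁻¹ ≤ ((i:ℝ)+1)⁻¹ := by
        apply inv_anti₀ (by positivity)
        have h3 : i ≤ φ i := hφ.le_apply
        have := (Nat.cast_le (α := ℝ)).2 h3
        linarith
      linarith
    refine ⟨y, ⟨hyC, hfy⟩, ?_⟩
    simpa [Metric.mem_closedBall, dist_comm] using hyball
  -- the predicate D
  set D : ℕ → S → EuclideanSpace ℝ (Fin d) → Prop :=
    fun k s x => ∀ j, g j s x < ENNReal.ofReal ((2:ℝ)⁻¹ ^ k) with hD
  have rpos : ∀ k : ℕ, (0:ℝ) < 2⁻¹ ^ k := fun k => pow_pos (by norm_num) k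
  have hDmeas : ∀ k n, MeasurableSet {s | D k s (c n)} := by
    intro k n
    have : {s | D k s (c n)} = ⋂ j, {s | g j s (c n) < ENNReal.ofReal ((2:ℝ)⁻¹ ^ k)} := by
      ext s; simp [hD]
    rw [this]
    exact MeasurableSet.iInter fun j => measurableSet_lt (hgm j (c n)) measurable_const
  -- (iii): approximating a point of F s
  have key3 : ∀ s y, y ∈ F s → ∀ η > 0, ∀ k, ∃ n, dist (c n) y < η ∧ D k s (c n) := by
    intro s y hy η hη k
    obtain ⟨n, hn⟩ := hcd y (hy.1) (min η ((2:ℝ)⁻¹ ^ k)) (lt_min hη (rpos k))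
    refine ⟨n, hn.trans_le (min_le_left _ _), key1 s (c n) _ (rpos k)
      ⟨y, hy, hn.trans_le (min_le_right _ _)⟩⟩
  have hbase : ∀ s, ∃ n, D 0 s (c n) := by
    intro s
    obtain ⟨y, hy⟩ := hFne s
    obtain ⟨n, _, hn⟩ := key3 s y hy 1 one_pos 0
    exact ⟨n, hn⟩
  have hstep : ∀ s k x, D k s x → ∃ n, D (k+1) s (c n) ∧ dist (c n) x < (2:ℝ)⁻¹^k * 2 := by
    intro s k x hx
    obtain ⟨y, hyF, hxy⟩ := key2 s x _ (rpos k) hx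
    obtain ⟨n, hn1, hn2⟩ := key3 s y hyF ((2:ℝ)⁻¹ ^ k) (rpos k) (k+1)
    refine ⟨n, hn2, ?_⟩
    calc dist (c n) x ≤ dist (c n) y + dist y x := dist_triangle _ _ _
      _ < (2:ℝ)⁻¹^k * 2 := by rw [dist_comm y x]; linarith
  obtain ⟨v, hvm, hvD, hvdist⟩ := aux_seq c D hDmeas hbase hstep
  -- Cauchy and limit
  have hcau : ∀ s, CauchySeq fun k => v k s := by
    intro s
    apply cauchySeq_of_le_geometric (2:ℝ)⁻¹ 2 (by norm_num)
    intro k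
    rw [dist_comm]
    calc dist (v (k+1) s) (v k s) ≤ (2:ℝ)⁻¹^k * 2 := (hvdist k s).le
      _ = 2 * (2:ℝ)⁻¹^k := by ring
  have hlim : ∀ s, ∃ l, Tendsto (fun k => v k s) atTop (𝓝 l) :=
    fun s => cauchySeq_tendsto_of_complete (hcau s)
  choose ν hν using hlim
  have hνm : Measurable ν :=
    measurable_of_tendsto_metrizable hvm (tendsto_pi_nhds.2 hν)
  refine ⟨ν, hνm, fun s => ?_⟩
  have hνF : ν s ∈ F s := by
    rw [← (hFcl s).closure_eq]
    rw [Metric.mem_closure_iff]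
    intro ε hε
    obtain ⟨N, hN⟩ := Metric.tendsto_atTop.1 (hν s) (ε/2) (by linarith)
    have h1 : ∀ᶠ k in atTop, dist (v k s) (ν s) < ε/2 := eventually_atTop.2 ⟨N, hN⟩
    have h2 : ∀ᶠ k : ℕ in atTop, (2:ℝ)⁻¹^k < ε/2 := by
      have := tendsto_pow_atTop_nhds_zero_of_lt_one (by norm_num : (0:ℝ) ≤ 2⁻¹) (by norm_num)
      exact (this.eventually (eventually_lt_nhds (by linarith : (0:ℝ) < ε/2)))
    obtain ⟨k, hk1, hk2⟩ := (h1.and h2).exists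
    obtain ⟨y, hyF, hy⟩ := key2 s (v k s) _ (rpos k) (hvD k s)
    refine ⟨y, hyF, ?_⟩
    calc dist (ν s) y ≤ dist (ν s) (v k s) + dist (v k s) y := dist_triangle _ _ _
      _ < ε := by rw [dist_comm (ν s) (v k s)]; linarith
  exact ⟨hνF.1, le_antisymm hνF.2 (hmle s _ hνF.1)⟩

/-- Measurable selection of the optimal strategy. -/
theorem stmt_5 {S : Type*} [MeasurableSpace S] {d : ℕ}
    (C : Set (EuclideanSpace ℝ (Fin d))) (hCne : C.Nonempty) (hCcl : IsClosed C)
    (α : ℝ) (hα : 0 < α)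
    (Z lam : S → EuclideanSpace ℝ (Fin d)) (hZ : Measurable Z) (hlam : Measurable lam)
    (M : S → Matrix (Fin d) (Fin d) ℝ) (hM : ∀ i j, Measurable fun s => M s i j)
    (hMinv : ∀ s, IsUnit (M s)) :
    ∃ ν : S → EuclideanSpace ℝ (Fin d), Measurable ν ∧
      ∀ s, ν s ∈ C ∧
        ‖Matrix.toEuclideanLin (M s) (ν s - (Z s + α⁻¹ • lam s))‖ ^ 2 =
          sInf ((fun ν' => ‖Matrix.toEuclideanLin (M s) (ν' - (Z s + α⁻¹ • lam s))‖ ^ 2)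
            '' C) := by
  classical
  set b : S → EuclideanSpace ℝ (Fin d) := fun s => Z s + α⁻¹ • lam s with hbdef
  have hb : Measurable b := hZ.add (hlam.const_smul α⁻¹)
  set f : S → EuclideanSpace ℝ (Fin d) → ℝ :=
    fun s x => ‖Matrix.toEuclideanLin (M s) (x - b s)‖ ^ 2 with hfdef
  have hfm : ∀ x, Measurable fun s => f s x := by
    intro x
    have hw : Measurable fun s => Matrix.toEuclideanLin (M s) (x - b s) := by
      have : Measurable fun s => (MeasurableEquiv.toLp 2 (Fin d → ℝ)).symm
          (Matrix.toEuclideanLin (M s) (x - b s)) := by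
        simp only [MeasurableEquiv.coe_toLp_symm, Matrix.piLp_ofLp_toEuclideanLin]
        rw [measurable_pi_iff]
        intro i
        simp only [Matrix.toLin'_apply]
        have : (fun s => (Matrix.mulVec (M s) (WithLp.ofLp (x - b s))) i)
            = fun s => ∑ j, M s i j * (WithLp.ofLp (x - b s)) j := by
          funext s; simp [Matrix.mulVec, dotProduct]
        rw [this]
        apply Finset.measurable_sum
        intro j _
        apply (hM i j).mul
        have hbj : Measurable fun s => WithLp.ofLp (b s) j :=
          (measurable_pi_apply j).comp
            ((MeasurableEquiv.toLp 2 (Fin d → ℝ)).symm.measurable.comp hb)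
        exact (measurable_const.sub hbj)
      have := (MeasurableEquiv.toLp 2 (Fin d → ℝ)).measurable.comp this
      exact this
    exact (hw.norm).pow_const 2
  have hfc : ∀ s, Continuous (f s) := by
    intro s
    exact (((Matrix.toEuclideanLin (M s)).continuous_of_finiteDimensional.comp
      (continuous_id.sub continuous_const)).norm).pow 2
  have hmin : ∀ s, ∃ y ∈ C, ∀ z ∈ C, f s y ≤ f s z := by
    intro s
    set A : Matrix (Fin d) (Fin d) ℝ := M s with hAdef
    have hA : IsUnit A := hMinv s
    have hdet : IsUnit A.det := (Matrix.isUnit_iff_isUnit_det A).1 hA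
    have h1 : Matrix.toEuclideanLin A ∘ₗ Matrix.toEuclideanLin A⁻¹ = LinearMap.id := by
      apply LinearMap.ext; intro x
      simp only [LinearMap.comp_apply, Matrix.toEuclideanLin_apply, LinearMap.id_apply]
      simp [Matrix.mulVec_mulVec, Matrix.mul_nonsing_inv A hdet]
    have h2 : Matrix.toEuclideanLin A⁻¹ ∘ₗ Matrix.toEuclideanLin A = LinearMap.id := by
      apply LinearMap.ext; intro x
      simp only [LinearMap.comp_apply, Matrix.toEuclideanLin_apply, LinearMap.id_apply]
      simp [Matrix.mulVec_mulVec, Matrix.nonsing_inv_mul A hdet]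
    let eL : EuclideanSpace ℝ (Fin d) ≃ₗ[ℝ] EuclideanSpace ℝ (Fin d) :=
      LinearEquiv.ofLinear (Matrix.toEuclideanLin A) (Matrix.toEuclideanLin A⁻¹) h1 h2
    let e : EuclideanSpace ℝ (Fin d) ≃L[ℝ] EuclideanSpace ℝ (Fin d) := eL.toContinuousLinearEquiv
    have heA : ∀ z, e z = Matrix.toEuclideanLin A z := fun _ => rfl
    have hgen : ∀ (e' : EuclideanSpace ℝ (Fin d) ≃L[ℝ] EuclideanSpace ℝ (Fin d)),
        ∃ K : ℝ, 0 ≤ K ∧ ∀ z : EuclideanSpace ℝ (Fin d), ‖z‖ ≤ K * ‖e' z‖ := by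
      intro e'
      refine ⟨‖(e'.symm : EuclideanSpace ℝ (Fin d) →L[ℝ] EuclideanSpace ℝ (Fin d))‖,
        norm_nonneg _, fun z => ?_⟩
      have h := (e'.symm :
        EuclideanSpace ℝ (Fin d) →L[ℝ] EuclideanSpace ℝ (Fin d)).le_opNorm (e' z)
      rw [ContinuousLinearEquiv.coe_coe, e'.symm_apply_apply] at h
      exact h
    obtain ⟨K, hK0, hKanti⟩ := hgen e
    obtain ⟨c0, hc0⟩ := hCne
    set R : ℝ := K * ‖Matrix.toEuclideanLin A (c0 - b s)‖ with hR
    have hKcpt : IsCompact (C ∩ Metric.closedBall (b s) R) :=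
      (isCompact_closedBall (b s) R).inter_left hCcl
    have hc0mem : c0 ∈ C ∩ Metric.closedBall (b s) R := by
      refine ⟨hc0, ?_⟩
      rw [Metric.mem_closedBall, dist_eq_norm, hR]
      have h := hKanti (c0 - b s)
      rw [heA] at h
      exact h
    obtain ⟨y, hy, hymin⟩ := hKcpt.exists_isMinOn ⟨c0, hc0mem⟩ (hfc s).continuousOn
    refine ⟨y, hy.1, fun z hz => ?_⟩
    by_cases hzball : z ∈ Metric.closedBall (b s) R
    · exact hymin ⟨hz, hzball⟩
    · have hRz : R < ‖z - b s‖ := by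
        rw [Metric.mem_closedBall, dist_eq_norm, not_le] at hzball; exact hzball
      have hlt : K * ‖Matrix.toEuclideanLin A (c0 - b s)‖
          < K * ‖Matrix.toEuclideanLin A (z - b s)‖ :=
        lt_of_lt_of_le (by rw [← hR]; exact hRz)
          (by have h := hKanti (z - b s); rw [heA] at h; exact h)
      have hnorm : ‖Matrix.toEuclideanLin A (c0 - b s)‖
          < ‖Matrix.toEuclideanLin A (z - b s)‖ := lt_of_mul_lt_mul_left hlt hK0
      have hsq : f s c0 < f s z := by
        have h0 : (0:ℝ) ≤ ‖Matrix.toEuclideanLin A (c0 - b s)‖ := norm_nonneg _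
        simp only [hfdef, hAdef]
        nlinarith
      exact le_of_lt (lt_of_le_of_lt (hymin hc0mem) hsq)
  obtain ⟨ν, hνm, hν⟩ := exists_measurable_argmin C hCne hCcl f hfm hfc hmin
  exact ⟨ν, hνm, fun s => ⟨(hν s).1, (hν s).2⟩⟩
end

section
/- Growth estimate for the doubly truncated exponential-transform generator: for all (u, v) ∈ ℝ × E, |G(u, v)| ≤ β ᾱ |u| + (γ̂/2)‖m v‖², where γ̂ = γ c² / (β (c¹)²) + 1/c¹. In particular G satisfies assumption (H₁) with parameters a := β ᾱ (in the role of the bounded coefficient), b := 1 and quadratic-growth constant γ̂. -/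
/-- Growth estimate for the doubly truncated exponential-transform generator. -/
theorem stmt_12 {d : ℕ}
    (m : EuclideanSpace ℝ (Fin d) →ₗ[ℝ] EuclideanSpace ℝ (Fin d))
    (β γ α' : ℝ) (hβ : 0 < β) (hγ : 0 ≤ γ) (hα' : 0 ≤ α')
    (F : ℝ → EuclideanSpace ℝ (Fin d) → ℝ)
    (hF : ∀ y z, |F y z| ≤ α' + γ / 2 * ‖m z‖ ^ 2)
    (c₁ c₂ : ℝ) (hc₁ : 0 < c₁) (hc₁₂ : c₁ ≤ c₂)
    (G : ℝ → EuclideanSpace ℝ (Fin d) → ℝ)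
    (hG : ∀ u v, G u v =
      β * max (-c₂) (min u c₂) *
          F (Real.log (max u c₁) / β) ((β * max u c₁)⁻¹ • v)
        - ‖m v‖ ^ 2 / (2 * max u c₁)) :
    ∀ u v, |G u v| ≤
      β * α' * |u| + (γ * c₂ / (β * c₁ ^ 2) + 1 / c₁) / 2 * ‖m v‖ ^ 2 := by
  intro u v
  rw [hG u v]
  set t := max u c₁ with htdef
  set ρ := max (-c₂) (min u c₂) with hρdef
  set M := ‖m v‖ with hM
  have hM0 : 0 ≤ M := norm_nonneg _
  have ht1 : c₁ ≤ t := le_max_right _ _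
  have ht0 : 0 < t := lt_of_lt_of_le hc₁ ht1
  have hc₂0 : 0 < c₂ := lt_of_lt_of_le hc₁ hc₁₂
  have hρu : |ρ| ≤ |u| := by
    rw [abs_le]
    constructor
    · exact le_trans (le_min (neg_abs_le u) (by linarith [abs_nonneg u])) (le_max_right _ _)
    · exact max_le (by linarith [abs_nonneg u]) ((min_le_left u c₂).trans (le_abs_self u))
  have hρc : |ρ| ≤ c₂ := by
    rw [abs_le]
    exact ⟨le_max_left _ _, max_le (by linarith) (min_le_right _ _)⟩
  have hρ0 : 0 ≤ |ρ| := abs_nonneg _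
  have hnorm : ‖m ((β * t)⁻¹ • v)‖ = (β * t)⁻¹ * M := by
    rw [map_smul, norm_smul, Real.norm_eq_abs, abs_of_pos (by positivity)]
  have hF' := hF (Real.log t / β) ((β * t)⁻¹ • v)
  rw [hnorm] at hF'
  have hinv : (β * t)⁻¹ ≤ (β * c₁)⁻¹ := by
    apply inv_anti₀ (by positivity)
    nlinarith
  have h1 : |β * ρ * F (Real.log t / β) ((β * t)⁻¹ • v)| ≤
      β * α' * |u| + γ * c₂ / (β * c₁ ^ 2) / 2 * M ^ 2 := by
    calc |β * ρ * F (Real.log t / β) ((β * t)⁻¹ • v)|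
        = β * |ρ| * |F (Real.log t / β) ((β * t)⁻¹ • v)| := by
          rw [abs_mul, abs_mul, abs_of_pos hβ]
      _ ≤ β * |ρ| * (α' + γ / 2 * ((β * t)⁻¹ * M) ^ 2) := by
          exact mul_le_mul_of_nonneg_left hF' (by positivity)
      _ = β * |ρ| * α' + β * |ρ| * (γ / 2 * ((β * t)⁻¹ * M) ^ 2) := by ring
      _ ≤ β * α' * |u| + β * c₂ * (γ / 2 * ((β * c₁)⁻¹ * M) ^ 2) := by
          have e1 : β * |ρ| * α' ≤ β * α' * |u| := by
            have := mul_le_mul_of_nonneg_left hρu (mul_nonneg hβ.le hα')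
            nlinarith
          have e2 : β * |ρ| * (γ / 2 * ((β * t)⁻¹ * M) ^ 2) ≤
              β * c₂ * (γ / 2 * ((β * c₁)⁻¹ * M) ^ 2) := by
            have hi0 : (0:ℝ) ≤ (β * t)⁻¹ := by positivity
            have : ((β * t)⁻¹ * M) ^ 2 ≤ ((β * c₁)⁻¹ * M) ^ 2 := by
              apply pow_le_pow_left₀ (by positivity)
              exact mul_le_mul_of_nonneg_right hinv hM0
            have h3 : γ / 2 * ((β * t)⁻¹ * M) ^ 2 ≤ γ / 2 * ((β * c₁)⁻¹ * M) ^ 2 := by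
              exact mul_le_mul_of_nonneg_left this (by positivity)
            have h4 : (0:ℝ) ≤ γ / 2 * ((β * t)⁻¹ * M) ^ 2 := by positivity
            calc β * |ρ| * (γ / 2 * ((β * t)⁻¹ * M) ^ 2)
                ≤ β * c₂ * (γ / 2 * ((β * t)⁻¹ * M) ^ 2) :=
                  mul_le_mul_of_nonneg_right (mul_le_mul_of_nonneg_left hρc hβ.le) h4
              _ ≤ β * c₂ * (γ / 2 * ((β * c₁)⁻¹ * M) ^ 2) :=
                  mul_le_mul_of_nonneg_left h3 (by positivity)
          linarith
      _ = β * α' * |u| + γ * c₂ / (β * c₁ ^ 2) / 2 * M ^ 2 := by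
          field_simp
  have h2 : |M ^ 2 / (2 * t)| ≤ 1 / c₁ / 2 * M ^ 2 := by
    rw [abs_of_nonneg (by positivity)]
    rw [div_le_iff₀ (by positivity)]
    have : 1 / c₁ / 2 * M ^ 2 * (2 * t) = M ^ 2 * (t / c₁) := by ring
    rw [this]
    nlinarith [(one_le_div hc₁).2 ht1, sq_nonneg M]
  calc |β * ρ * F (Real.log t / β) ((β * t)⁻¹ • v) - M ^ 2 / (2 * t)|
      ≤ |β * ρ * F (Real.log t / β) ((β * t)⁻¹ • v)| + |M ^ 2 / (2 * t)| :=
        abs_sub _ _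
    _ ≤ β * α' * |u| + (γ * c₂ / (β * c₁ ^ 2) + 1 / c₁) / 2 * M ^ 2 := by
        nlinarith [h1, h2]
end
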